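/- Let r : ℝ^d → ℝ be twice continuously differentiable on the closed ball B(β*, R) with γ · I_d ⪯ ∇²r(β) ⪯ α · I_d for all β ∈ B(β*, R), where 0 < γ ≤ α, and suppose ∇r(β*) = 0. Set η = 2/(α + γ), and let A, B ≥ 0 satisfy η A ≤ γ/(α + γ) and η B ≤ γ R/(α + γ). Let β₀ ∈ B(β*, R) and define β_{t+1} = β_t − η g_t for t = 0, …, P−1, where each g_t ∈ ℝ^d satisfies ‖g_t − ∇r(β_t)‖₂ ≤ A · ‖β_t − β*‖₂ + B. Then β_t ∈ B(β*, R) for all t ≤ P, and ‖β_P − β*‖₂ ≤ R · exp(−P γ/(α + γ)) + 2B/γ. -/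

import Mathlib

/-!
The Hessian bounds `γ ≤ ∇²r ≤ α` on the ball make the exact gradient step with `η = 2/(α+γ)` a
contraction of rate `(α-γ)/(α+γ)` there: by the mean value inequality it suffices that
`‖∇²r - (α+γ)/2 • I‖ ≤ (α-γ)/2`, which holds because this operator is symmetric with Rayleigh
quotients in `[-(α-γ)/2, (α-γ)/2]`. The gradient error adds at most `η (A e + B)` and
`η A ≤ γ/(α+γ)`, so `e t = ‖β t - β*‖` obeys the affine recursion
`e (t+1) ≤ (1 - κ) e t + κ (2B/γ)` with `κ = γ/(α+γ)`, as long as `β t` stays in the ball.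
Since `2B/γ ≤ R`, the recursion itself keeps `e t ≤ R`, and unrolling it gives
`e P ≤ (1 - κ)^P R + 2B/γ ≤ exp(-Pκ) R + 2B/γ`.
-/

open Metric InnerProductSpace
open scoped RealInnerProductSpace Gradient

section
variable {E : Type*} [NormedAddCommGroup E] [InnerProductSpace ℝ E]

theorem ContinuousLinearMap.opNorm_le_of_abs_inner_self_le {T : E →L[ℝ] E} {M : ℝ}
    (hT : (T : E →ₗ[ℝ] E).IsSymmetric) (hM : 0 ≤ M) (h : ∀ x, |⟪T x, x⟫| ≤ M * ‖x‖ ^ 2) :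
    ‖T‖ ≤ M := by
  rw [T.norm_eq_iSup_rayleighQuotient hT]
  refine ciSup_le fun x => ?_
  rcases eq_or_ne x 0 with rfl | hx
  · simpa using hM
  rw [rayleighQuotient, reApplyInnerSelf_apply, abs_div, abs_sq, div_le_iff₀ (by positivity)]
  simpa using h x

theorem fderiv_apply_const_apply {f : E → ℝ} {x : E} (h : DifferentiableAt ℝ (fderiv ℝ f) x)
    (v w : E) : fderiv ℝ (fun y => fderiv ℝ f y v) x w = fderiv ℝ (fderiv ℝ f) x w v := by
  simp [fderiv_clm_apply h (differentiableAt_const v)]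

def HessianBoundedOn (f : E → ℝ) (γ α : ℝ) (s : Set E) : Prop :=
  ∀ x ∈ s, ∀ v, γ * ‖v‖ ^ 2 ≤ fderiv ℝ (fun y => fderiv ℝ f y v) x v ∧
    fderiv ℝ (fun y => fderiv ℝ f y v) x v ≤ α * ‖v‖ ^ 2

variable [CompleteSpace E] {f : E → ℝ} {x : E} {s : Set E} {γ α : ℝ}

/-- `toDual ℝ E` is typed as conjugate-linear, which over `ℝ` is definitionally linear; this lets
the second derivative be read as an operator on `E`. -/
noncomputable def hessianOp (f : E → ℝ) (x : E) : E →L[ℝ] E :=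
  (toDual ℝ E).symm.toLinearIsometry.toContinuousLinearMap ∘L fderiv ℝ (fderiv ℝ f) x

theorem inner_hessianOp_apply (v w : E) :
    ⟪hessianOp f x v, w⟫ = fderiv ℝ (fderiv ℝ f) x v w :=
  toDual_symm_apply

theorem hasFDerivAt_gradient (h : DifferentiableAt ℝ (fderiv ℝ f) x) :
    HasFDerivAt (∇ f) (hessianOp f x) x :=
  (toDual ℝ E).symm.toLinearIsometry.toContinuousLinearMap.hasFDerivAt.comp x h.hasFDerivAt

theorem ContDiffAt.isSymmetric_hessianOp (hf : ContDiffAt ℝ 2 f x) :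
    (hessianOp f x : E →ₗ[ℝ] E).IsSymmetric := fun v w => by
  rw [ContinuousLinearMap.coe_coe, inner_hessianOp_apply, real_inner_comm,
    inner_hessianOp_apply, (hf.isSymmSndFDerivAt (by simp)).eq]

theorem ContDiffAt.norm_hessianOp_sub_smul_id_le (hf : ContDiffAt ℝ 2 f x)
    (hγα : γ ≤ α) (hH : HessianBoundedOn f γ α s) (hx : x ∈ s) :
    ‖hessianOp f x - ((α + γ) / 2) • ContinuousLinearMap.id ℝ E‖ ≤ (α - γ) / 2 := by
  have hinner : ∀ v w, ⟪(hessianOp f x - ((α + γ) / 2) • ContinuousLinearMap.id ℝ E) v, w⟫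
      = ⟪hessianOp f x v, w⟫ - (α + γ) / 2 * ⟪v, w⟫ := fun v w => by
    simp [inner_sub_left, real_inner_smul_left]
  have hsymm : ((hessianOp f x - ((α + γ) / 2) • ContinuousLinearMap.id ℝ E :
      E →L[ℝ] E) : E →ₗ[ℝ] E).IsSymmetric := by
    rw [ContinuousLinearMap.toLinearMap_sub, ContinuousLinearMap.toLinearMap_smul,
      ContinuousLinearMap.coe_id]
    exact hf.isSymmetric_hessianOp.sub (LinearMap.IsSymmetric.id.smul rfl)
  refine ContinuousLinearMap.opNorm_le_of_abs_inner_self_le hsymm (by linarith) fun v => ?_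
  rw [hinner, inner_hessianOp_apply, real_inner_self_eq_norm_sq, abs_le]
  obtain ⟨h₁, h₂⟩ := hH x hx v
  rw [fderiv_apply_const_apply ((hf.fderiv_right (m := 1) le_rfl).differentiableAt
    one_ne_zero)] at h₁ h₂
  constructor <;> linarith

theorem Convex.norm_gradient_sub_gradient_sub_smul_le (hs : Convex ℝ s)
    (hf : ∀ x ∈ s, ContDiffAt ℝ 2 f x) (hγα : γ ≤ α)
    (hH : HessianBoundedOn f γ α s) {x y : E} (hx : x ∈ s) (hy : y ∈ s) :
    ‖∇ f x - ∇ f y - ((α + γ) / 2) • (x - y)‖ ≤ (α - γ) / 2 * ‖x - y‖ := by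
  have hderiv : ∀ z ∈ s, HasFDerivWithinAt (fun z => ∇ f z - ((α + γ) / 2) • z)
      (hessianOp f z - ((α + γ) / 2) • ContinuousLinearMap.id ℝ E) s z := fun z hz =>
    ((hasFDerivAt_gradient (((hf z hz).fderiv_right (m := 1) le_rfl).differentiableAt
      one_ne_zero)).sub ((hasFDerivAt_id z).const_smul _)).hasFDerivWithinAt
  have := hs.norm_image_sub_le_of_norm_hasFDerivWithin_le hderiv
    (fun z hz => (hf z hz).norm_hessianOp_sub_smul_id_le hγα hH hz) hy hx
  rwa [smul_sub, sub_sub_sub_comm]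

theorem Convex.norm_sub_smul_gradient_sub_le (hs : Convex ℝ s)
    (hf : ∀ x ∈ s, ContDiffAt ℝ 2 f x) (hαγ : 0 < α + γ) (hγα : γ ≤ α)
    (hH : HessianBoundedOn f γ α s) {x y : E} (hx : x ∈ s) (hy : y ∈ s) :
    ‖(x - (2 / (α + γ)) • ∇ f x) - (y - (2 / (α + γ)) • ∇ f y)‖
      ≤ (α - γ) / (α + γ) * ‖x - y‖ := by
  have hrw : (x - (2 / (α + γ)) • ∇ f x) - (y - (2 / (α + γ)) • ∇ f y)
      = -((2 / (α + γ)) • (∇ f x - ∇ f y - ((α + γ) / 2) • (x - y))) := by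
    rw [smul_sub _ (∇ f x - ∇ f y), smul_smul, div_mul_div_cancel₀ hαγ.ne', div_self two_ne_zero,
      one_smul, smul_sub]
    abel
  rw [hrw, norm_neg, norm_smul, Real.norm_of_nonneg (by positivity)]
  calc 2 / (α + γ) * ‖∇ f x - ∇ f y - ((α + γ) / 2) • (x - y)‖
      ≤ 2 / (α + γ) * ((α - γ) / 2 * ‖x - y‖) := by
        gcongr; exact hs.norm_gradient_sub_gradient_sub_smul_le hf hγα hH hx hy
    _ = (α - γ) / (α + γ) * ‖x - y‖ := by field_simp

theorem Convex.norm_sub_smul_sub_le_of_norm_sub_gradient_le (hs : Convex ℝ s)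
    (hf : ∀ x ∈ s, ContDiffAt ℝ 2 f x) (hαγ : 0 < α + γ) (hγα : γ ≤ α)
    (hH : HessianBoundedOn f γ α s) {x xs g : E} (hx : x ∈ s) (hxs : xs ∈ s)
    (hcrit : ∇ f xs = 0) {A B : ℝ} (hA : 2 / (α + γ) * A ≤ γ / (α + γ))
    (hg : ‖g - ∇ f x‖ ≤ A * ‖x - xs‖ + B) :
    ‖x - (2 / (α + γ)) • g - xs‖ ≤ α / (α + γ) * ‖x - xs‖ + 2 / (α + γ) * B := by
  have hexact := hs.norm_sub_smul_gradient_sub_le hf hαγ hγα hH hx hxs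
  rw [hcrit, smul_zero, sub_zero] at hexact
  have hrw : x - (2 / (α + γ)) • g - xs
      = (x - (2 / (α + γ)) • ∇ f x - xs) - (2 / (α + γ)) • (g - ∇ f x) := by
    rw [smul_sub]; abel
  have hnoise : ‖(2 / (α + γ)) • (g - ∇ f x)‖ ≤ 2 / (α + γ) * (A * ‖x - xs‖ + B) := by
    rw [norm_smul, Real.norm_of_nonneg (by positivity)]; gcongr
  have hsplit : α / (α + γ) = (α - γ) / (α + γ) + γ / (α + γ) := by ring
  rw [hrw, hsplit]
  nlinarith [norm_sub_le_of_le hexact hnoise, norm_nonneg (x - xs)]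

end

section
variable {e : ℕ → ℝ} {κ K : ℝ} {P : ℕ}

theorem forall_le_of_le_one_sub_mul_add (hκ : 0 ≤ κ) (hκ1 : κ ≤ 1) {R : ℝ} (hKR : K ≤ R)
    (h0 : e 0 ≤ R) (hstep : ∀ t < P, e t ≤ R → e (t + 1) ≤ (1 - κ) * e t + κ * K) :
    ∀ t ≤ P, e t ≤ R := by
  intro t
  induction t with
  | zero => exact fun _ => h0
  | succ t ih =>
    intro ht
    have he := ih (by omega)
    have : 0 ≤ 1 - κ := by linarith
    calc e (t + 1) ≤ (1 - κ) * e t + κ * K := hstep t ht he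
      _ ≤ (1 - κ) * R + κ * R := by gcongr
      _ = R := by ring

theorem le_one_sub_pow_mul_add (hκ1 : κ ≤ 1) {a : ℝ} (h0 : e 0 ≤ a + K)
    (hstep : ∀ t < P, e (t + 1) ≤ (1 - κ) * e t + κ * K) :
    ∀ t ≤ P, e t ≤ (1 - κ) ^ t * a + K := by
  intro t
  induction t with
  | zero => simpa using h0
  | succ t ih =>
    intro ht
    have : 0 ≤ 1 - κ := by linarith
    calc e (t + 1) ≤ (1 - κ) * e t + κ * K := hstep t ht
      _ ≤ (1 - κ) * ((1 - κ) ^ t * a + K) + κ * K := by gcongr; exact ih (by omega)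
      _ = (1 - κ) ^ (t + 1) * a + K := by ring

end

theorem Real.one_sub_pow_le_exp_neg_mul {x : ℝ} (hx : x ≤ 1) (n : ℕ) :
    (1 - x) ^ n ≤ Real.exp (-(n * x)) := by
  calc (1 - x) ^ n ≤ Real.exp (-x) ^ n :=
        pow_le_pow_left₀ (by linarith) (Real.one_sub_le_exp_neg x) n
    _ = Real.exp (-(n * x)) := by rw [← Real.exp_nat_mul, mul_neg]

theorem robust_gd_convergence_general
    {d : ℕ} (r : EuclideanSpace ℝ (Fin d) → ℝ)
    (βs : EuclideanSpace ℝ (Fin d)) (R γ α A B : ℝ) (P : ℕ)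
    (β g : ℕ → EuclideanSpace ℝ (Fin d))
    (hr : ContDiff ℝ 2 r)
    (hγ : 0 < γ) (hγα : γ ≤ α)
    (hHess : ∀ β' ∈ closedBall βs R, ∀ v : EuclideanSpace ℝ (Fin d),
      γ * ‖v‖ ^ 2 ≤ fderiv ℝ (fun y => fderiv ℝ r y v) β' v ∧
        fderiv ℝ (fun y => fderiv ℝ r y v) β' v ≤ α * ‖v‖ ^ 2)
    (hgrad0 : gradient r βs = 0)
    (hB : 0 ≤ B)
    (hηA : 2 / (α + γ) * A ≤ γ / (α + γ))
    (hηB : 2 / (α + γ) * B ≤ γ * R / (α + γ))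
    (hβ0 : β 0 ∈ closedBall βs R)
    (hupd : ∀ t < P, β (t + 1) = β t - (2 / (α + γ)) • g t)
    (hg : ∀ t < P, ‖g t - gradient r (β t)‖ ≤ A * ‖β t - βs‖ + B) :
    (∀ t ≤ P, β t ∈ closedBall βs R)
    ∧ ‖β P - βs‖ ≤ R * Real.exp (-(P : ℝ) * γ / (α + γ)) + 2 * B / γ := by
  have hαγ : 0 < α + γ := by linarith
  have hR : 0 ≤ R := dist_nonneg.trans hβ0
  have hκ : 0 ≤ γ / (α + γ) := by positivity
  have hκ1 : γ / (α + γ) ≤ 1 := by rw [div_le_one hαγ]; linarith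
  have hK : 0 ≤ 2 * B / γ := by positivity
  have hKR : 2 * B / γ ≤ R := by
    rw [div_le_iff₀ hγ]
    field_simp at hηB
    linarith
  have hstep : ∀ t < P, ‖β t - βs‖ ≤ R → ‖β (t + 1) - βs‖
      ≤ (1 - γ / (α + γ)) * ‖β t - βs‖ + γ / (α + γ) * (2 * B / γ) := fun t ht hβt => by
    have hrate : 1 - γ / (α + γ) = α / (α + γ) := by field_simp; ring
    have hnoise : γ / (α + γ) * (2 * B / γ) = 2 / (α + γ) * B := by field_simp
    rw [hupd t ht, hrate, hnoise]
    exact (convex_closedBall βs R).norm_sub_smul_sub_le_of_norm_sub_gradient_le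
      (fun x _ => hr.contDiffAt) hαγ hγα hHess (mem_closedBall_iff_norm.2 hβt)
      (mem_closedBall_self hR) hgrad0 hηA (hg t ht)
  have hball := forall_le_of_le_one_sub_mul_add hκ hκ1 hKR (mem_closedBall_iff_norm.1 hβ0) hstep
  refine ⟨fun t ht => mem_closedBall_iff_norm.2 (hball t ht), ?_⟩
  calc ‖β P - βs‖ ≤ (1 - γ / (α + γ)) ^ P * R + 2 * B / γ :=
        le_one_sub_pow_mul_add (e := fun t => ‖β t - βs‖) hκ1
          (by linarith [mem_closedBall_iff_norm.1 hβ0])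
          (fun t ht => hstep t ht (hball t ht.le)) P le_rfl
    _ ≤ Real.exp (-(P * (γ / (α + γ)))) * R + 2 * B / γ := by
        gcongr; exact Real.one_sub_pow_le_exp_neg_mul hκ1 P
    _ = R * Real.exp (-(P : ℝ) * γ / (α + γ)) + 2 * B / γ := by ring_nf

/-- **Deterministic robust gradient descent convergence (induction underlying Theorem 4.6).** -/
theorem robust_gd_convergence
    {d : ℕ} (r : EuclideanSpace ℝ (Fin d) → ℝ)
    (βs : EuclideanSpace ℝ (Fin d)) (R γ α A B : ℝ) (P : ℕ)
    (β g : ℕ → EuclideanSpace ℝ (Fin d))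
    (hr : ContDiff ℝ 2 r)
    (hγ : 0 < γ) (hγα : γ ≤ α)
    (hHess : ∀ β' ∈ closedBall βs R, ∀ v : EuclideanSpace ℝ (Fin d),
      γ * ‖v‖ ^ 2 ≤ fderiv ℝ (fun y => fderiv ℝ r y v) β' v ∧
        fderiv ℝ (fun y => fderiv ℝ r y v) β' v ≤ α * ‖v‖ ^ 2)
    (hgrad0 : gradient r βs = 0)
    (hA : 0 ≤ A) (hB : 0 ≤ B)
    (hηA : 2 / (α + γ) * A ≤ γ / (α + γ))
    (hηB : 2 / (α + γ) * B ≤ γ * R / (α + γ))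
    (hβ0 : β 0 ∈ closedBall βs R)
    (hupd : ∀ t < P, β (t + 1) = β t - (2 / (α + γ)) • g t)
    (hg : ∀ t < P, ‖g t - gradient r (β t)‖ ≤ A * ‖β t - βs‖ + B) :
    (∀ t ≤ P, β t ∈ closedBall βs R)
    ∧ ‖β P - βs‖ ≤ R * Real.exp (-(P : ℝ) * γ / (α + γ)) + 2 * B / γ :=
  robust_gd_convergence_general r βs R γ α A B P β g hr hγ hγα hHess hgrad0 hB hηA hηB hβ0 hupd hg
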